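/- In a projectional semilattice, for u ≠ 0 with dom(u) = Y and a domain-disjoint bijection σ: X → Y: C_X(C_Y(u ∧ e_σ) ∧ e_{σ^{-1}}) = u (i.e. composing with σ and then σ^{-1} via the outer composition recovers u). -/

import Mathlib

/-- A projectional semilattice: a bounded semilattice `(V, ⊓, ⊥, ⊤)` with
cylindrifications `c x`, diagonals `d x y` and a domain function `dm`,
satisfying axioms (PS0)–(PS12). Variables are modeled by `ℕ`. -/
class ProjSemilattice (V : Type*) extends SemilatticeInf V, BoundedOrder V where
  c : ℕ → V → V
  d : ℕ → ℕ → V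
  dm : V → Set ℕ
  /-- (PS1) -/
  c_bot : ∀ x, c x (⊥ : V) = ⊥
  /-- (PS2) -/
  le_c : ∀ x (u : V), u ≤ c x u
  /-- (PS3) -/
  c_inf : ∀ x (u v : V), c x (u ⊓ c x v) = c x u ⊓ c x v
  /-- (PS4) -/
  c_comm : ∀ x y (u : V), c x (c y u) = c y (c x u)
  /-- (PS5) -/
  dim_ax : ∀ x (u : V), u ≠ ⊥ → (u ≠ c x u ↔ u ≤ d x x)
  /-- (PS6) -/
  d_comp : ∀ x y z, x ≠ y → x ≠ z → (d y z : V) = c x (d y x ⊓ d x z)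
  /-- (PS7) -/
  d_inj : ∀ x y (u : V), x ≠ y → d x y ⊓ c x (d x y ⊓ u) ≤ u
  /-- (PS8) -/
  dm_finite : ∀ (u : V), u ≠ ⊥ → (dm u).Finite
  /-- (PS9) -/
  dm_def : ∀ (u : V), dm u = {x | u ≤ d x x}
  /-- (PS10) -/
  dm_empty : ∀ (u : V), dm u = ∅ → u = ⊤
  /-- (PS11) -/
  d_ne_bot : ∀ x, (d x x : V) ≠ ⊥
  /-- (PS12) -/
  d_symm : ∀ x y, (d x y : V) = d y x

open ProjSemilattice

/-- Generalized cylindrification `C_Z(u)`, where the finite set `Z` is given by an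
enumeration (a list); well-defined on sets by (PS4). -/
def Cl {V : Type*} [ProjSemilattice V] (l : List ℕ) (u : V) : V :=
  l.foldr (fun z a => c z a) u

/-- Generalized diagonal `e_λ := ⋀_{x ∈ X} d_{x, λ(x)}` of a function `λ` defined
on the finite variable set `X`. -/
def eF (V : Type*) [ProjSemilattice V] (X : Finset ℕ) (f : ℕ → ℕ) : V :=
  X.inf (fun x => d x (f x))

section Aux
variable {V : Type*} [ProjSemilattice V]

lemma c_idem (x : ℕ) (u : V) : c x (c x u) = c x u := by
  have h := c_inf x (⊤ : V) u
  rw [top_inf_eq] at h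
  exact le_antisymm (h ▸ inf_le_right) (le_c x _)

lemma c_mono (x : ℕ) {u v : V} (h : u ≤ v) : c x u ≤ c x v := by
  have h1 : u ⊓ c x v = u := inf_eq_left.mpr (h.trans (le_c x v))
  have h2 := c_inf x u v
  rw [h1] at h2
  exact h2.le.trans inf_le_right

lemma c_top (x : ℕ) : c x (⊤ : V) = ⊤ := le_antisymm le_top (le_c x ⊤)

lemma c_d_fixed {z a b : ℕ} (ha : z ≠ a) (hb : z ≠ b) : c z (d a b : V) = d a b := by
  have h := d_comp (V := V) z a b ha hb
  rw [h, c_idem]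

lemma c_inf_fixed {x : ℕ} {a b : V} (ha : c x a = a) (hb : c x b = b) :
    c x (a ⊓ b) = a ⊓ b :=
  le_antisymm (le_inf ((c_mono x inf_le_left).trans ha.le)
    ((c_mono x inf_le_right).trans hb.le)) (le_c x _)

lemma c_finset_inf_fixed {x : ℕ} {S : Finset ℕ} {f : ℕ → V}
    (h : ∀ z ∈ S, c x (f z) = f z) : c x (S.inf f) = S.inf f := by
  induction S using Finset.induction_on with
  | empty => simpa using c_top x
  | insert _ _ hx ih =>
    rw [Finset.inf_insert]
    exact c_inf_fixed (h _ (Finset.mem_insert_self _ _))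
      (ih fun z hz => h z (Finset.mem_insert_of_mem hz))

lemma d_inj' {x y : ℕ} (hxy : x ≠ y) (v : V) : d x y ⊓ c y (d x y ⊓ v) ≤ v := by
  rw [d_symm x y]
  exact d_inj y x v hxy.symm

lemma le_c_self_inf_d {x y : ℕ} {w : V} (hw : c x w = w) (hd : w ≤ c x (d x y)) :
    w ≤ c x (w ⊓ d x y) := by
  have h : c x (d x y ⊓ c x w) = c x (d x y) ⊓ c x w := c_inf x _ w
  rw [hw] at h
  calc w ≤ c x (d x y) ⊓ w := le_inf hd le_rfl
    _ = c x (d x y ⊓ w) := h.symm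
    _ = c x (w ⊓ d x y) := by rw [inf_comm]

lemma Cl_nil (u : V) : Cl [] u = u := rfl

lemma Cl_cons (z : ℕ) (l : List ℕ) (u : V) : Cl (z :: l) u = c z (Cl l u) := rfl

lemma le_Cl (l : List ℕ) (u : V) : u ≤ Cl l u := by
  induction l with
  | nil => exact le_rfl
  | cons z l ih => exact ih.trans (le_c z _)

lemma Cl_mono (l : List ℕ) {u v : V} (h : u ≤ v) : Cl l u ≤ Cl l v := by
  induction l with
  | nil => exact h
  | cons z l ih => exact c_mono z ih

lemma Cl_absorb {a : ℕ} {l : List ℕ} (h : a ∈ l) (u : V) :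
    c a (Cl l u) = Cl l u := by
  induction l with
  | nil => cases h
  | cons b l ih =>
    rcases List.mem_cons.mp h with h | h
    · subst h; rw [Cl_cons, c_idem]
    · rw [Cl_cons, c_comm, ih h]

lemma Cl_dedup (l : List ℕ) (u : V) : Cl l.dedup u = Cl l u := by
  induction l with
  | nil => rfl
  | cons a l ih =>
    by_cases h : a ∈ l
    · rw [List.dedup_cons_of_mem h, ih, Cl_cons, Cl_absorb h]
    · rw [List.dedup_cons_of_notMem h, Cl_cons, Cl_cons, ih]

lemma Cl_fixed {l : List ℕ} {u : V} (h : ∀ z ∈ l, c z u = u) : Cl l u = u := by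
  induction l with
  | nil => rfl
  | cons z l ih =>
    rw [Cl_cons, ih (fun z hz => h z (List.mem_cons_of_mem _ hz)),
      h z List.mem_cons_self]

lemma Cl_le_d {l : List ℕ} {a b : ℕ} {v : V} (hv : v ≤ d a b)
    (h : ∀ z ∈ l, z ≠ a ∧ z ≠ b) : Cl l v ≤ d a b := by
  induction l with
  | nil => exact hv
  | cons z l ih =>
    have h1 := ih (fun z hz => h z (List.mem_cons_of_mem _ hz))
    have h2 := h z List.mem_cons_self
    calc Cl (z :: l) v = c z (Cl l v) := rfl
      _ ≤ c z (d a b) := c_mono z h1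
      _ = d a b := c_d_fixed h2.1 h2.2

end Aux

/-- For `u ≠ ⊥` with `dom(u) = Y` and a domain-disjoint bijection `σ : X → Y`
(with inverse `σ'`): `C_X(C_Y(u ⊓ e_σ) ⊓ e_{σ⁻¹}) = u`, i.e. outer composition
with `σ` and then `σ⁻¹` recovers `u`. -/
theorem stmt18 {V : Type*} [ProjSemilattice V] (X Y : Finset ℕ)
    (hdisj : Disjoint X Y) (σ σ' : ℕ → ℕ)
    (hσ : ∀ x ∈ X, σ x ∈ Y) (hσ' : ∀ y ∈ Y, σ' y ∈ X)
    (hinv1 : ∀ x ∈ X, σ' (σ x) = x) (hinv2 : ∀ y ∈ Y, σ (σ' y) = y)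
    (lX lY : List ℕ) (hlX : lX.toFinset = X) (hlY : lY.toFinset = Y)
    (u : V) (hu : u ≠ ⊥) (hdm : dm u = ↑Y) :
    Cl lX (Cl lY (u ⊓ eF V X σ) ⊓ eF V Y σ') = u := by
  set e : V := eF V X σ with he_def
  -- eF V Y σ' = e
  have hYX : Y = X.image σ := by
    ext y
    constructor
    · intro hy
      exact Finset.mem_image.mpr ⟨σ' y, hσ' y hy, hinv2 y hy⟩
    · rintro hy
      rcases Finset.mem_image.mp hy with ⟨x, hx, rfl⟩
      exact hσ x hx
  have he' : eF V Y σ' = e := by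
    rw [he_def, eF, eF, hYX, Finset.inf_image]
    refine Finset.inf_congr rfl (fun x hx => ?_)
    simp only [Function.comp]
    rw [hinv1 x hx, d_symm]
  -- basic facts
  have hXY_ne : ∀ {a b : ℕ}, a ∈ X → b ∈ Y → a ≠ b := by
    intro a b ha hb h
    exact Finset.disjoint_left.mp hdisj ha (h ▸ hb)
  have hY_dd : ∀ y ∈ Y, u ≤ d y y := by
    intro y hy
    have hset : {x | u ≤ d x x} = (↑Y : Set ℕ) := (dm_def u).symm.trans hdm
    exact (Set.ext_iff.mp hset y).mpr (by exact_mod_cast hy)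
  have hX_fix : ∀ x ∈ X, c x u = u := by
    intro x hx
    by_contra h
    have h1 : u ≤ d x x := (dim_ax x u hu).mp (fun h2 => h h2.symm)
    have hset : {z | u ≤ d z z} = (↑Y : Set ℕ) := (dm_def u).symm.trans hdm
    have : x ∈ Y := by exact_mod_cast (Set.ext_iff.mp hset x).mp h1
    exact hXY_ne hx this rfl
  have he_le : ∀ x ∈ X, e ≤ d x (σ x) := by
    intro x hx
    exact Finset.inf_le hx
  -- Claim A
  have claimA : ∀ l : List ℕ, l.Nodup → (∀ z ∈ l, z ∈ Y) →
      ∀ w : V, Cl l (w ⊓ e) ⊓ e ≤ w ⊓ e := by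
    intro l
    induction l with
    | nil => intro _ _ w; exact inf_le_left
    | cons y l ih =>
      intro hnd hl w
      have hy : y ∈ Y := hl y List.mem_cons_self
      have hxX : σ' y ∈ X := hσ' y hy
      have hxy : σ' y ≠ y := hXY_ne hxX hy
      have hed : e ≤ d (σ' y) y := by
        have h1 := he_le (σ' y) hxX
        rwa [hinv2 y hy] at h1
      have hCld : Cl l (w ⊓ e) ≤ d (σ' y) y := by
        refine Cl_le_d (le_trans inf_le_right hed) (fun z hz => ?_)
        have hzY : z ∈ Y := hl z (List.mem_cons_of_mem _ hz)
        refine ⟨fun h => hXY_ne hxX hzY h.symm, fun h => ?_⟩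
        exact (List.nodup_cons.mp hnd).1 (h ▸ hz)
      calc Cl (y :: l) (w ⊓ e) ⊓ e = c y (Cl l (w ⊓ e)) ⊓ e := rfl
        _ ≤ (d (σ' y) y ⊓ c y (d (σ' y) y ⊓ Cl l (w ⊓ e))) ⊓ e := by
            refine le_inf (le_inf (inf_le_right.trans hed) ?_) inf_le_right
            rw [inf_eq_right.mpr hCld]
            exact inf_le_left
        _ ≤ Cl l (w ⊓ e) ⊓ e := inf_le_inf_right _ (d_inj' hxy _)
        _ ≤ w ⊓ e := ih (List.nodup_cons.mp hnd).2
            (fun z hz => hl z (List.mem_cons_of_mem _ hz)) w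
  -- Claim B
  have claimB : ∀ l : List ℕ, l.Nodup → (∀ z ∈ l, z ∈ X) →
      u ⊓ (X \ l.toFinset).inf (fun x => (d x (σ x) : V)) ≤ Cl l (u ⊓ e) := by
    intro l
    induction l with
    | nil =>
      intro _ _
      simp only [List.toFinset_nil, Finset.sdiff_empty]
      exact le_rfl
    | cons x l ih =>
      intro hnd hl
      have hxX : x ∈ X := hl x List.mem_cons_self
      have hxl : x ∉ l.toFinset := by
        simpa using (List.nodup_cons.mp hnd).1
      have hσx : σ x ∈ Y := hσ x hxX
      have hxσ : x ≠ σ x := hXY_ne hxX hσx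
      set S : Finset ℕ := X \ (x :: l).toFinset with hS
      have hins : X \ l.toFinset = insert x S := by
        ext z
        simp only [hS, List.toFinset_cons, Finset.mem_sdiff, Finset.mem_insert]
        constructor
        · rintro ⟨hzX, hzl⟩
          by_cases h : z = x
          · exact Or.inl h
          · exact Or.inr ⟨hzX, fun h' => (h'.elim h hzl)⟩
        · rintro (rfl | ⟨hzX, hz⟩)
          · exact ⟨hxX, fun h => hxl h⟩
          · exact ⟨hzX, fun h => hz (Or.inr h)⟩
      set w : V := u ⊓ S.inf (fun x => (d x (σ x) : V)) with hw
      have hwfix : c x w = w := by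
        refine c_inf_fixed (hX_fix x hxX) (c_finset_inf_fixed (fun z hz => ?_))
        have hzS := Finset.mem_sdiff.mp hz
        have hzx : x ≠ z := fun h => hzS.2 (by simp [List.toFinset_cons, ← h])
        exact c_d_fixed hzx (fun h => hXY_ne hxX (hσ z hzS.1) h)
      have hdle : w ≤ c x (d x (σ x)) := by
        have h1 : u ≤ d (σ x) (σ x) := hY_dd _ hσx
        have h2 : (d (σ x) (σ x) : V) = c x (d (σ x) x ⊓ d x (σ x)) :=
          d_comp x (σ x) (σ x) hxσ hxσ
        calc w ≤ u := inf_le_left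
          _ ≤ d (σ x) (σ x) := h1
          _ = c x (d (σ x) x ⊓ d x (σ x)) := h2
          _ ≤ c x (d x (σ x)) := c_mono x inf_le_right
      have hstep : w ≤ c x (w ⊓ d x (σ x)) := le_c_self_inf_d hwfix hdle
      have hre : w ⊓ d x (σ x)
          = u ⊓ (X \ l.toFinset).inf (fun x => (d x (σ x) : V)) := by
        rw [hins, Finset.inf_insert, hw, inf_assoc, inf_comm (S.inf _)]
      calc u ⊓ (X \ (x :: l).toFinset).inf (fun x => (d x (σ x) : V)) = w := rfl
        _ ≤ c x (w ⊓ d x (σ x)) := hstep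
        _ = c x (u ⊓ (X \ l.toFinset).inf (fun x => (d x (σ x) : V))) := by rw [hre]
        _ ≤ c x (Cl l (u ⊓ e)) := c_mono x (ih (List.nodup_cons.mp hnd).2
            (fun z hz => hl z (List.mem_cons_of_mem _ hz)))
        _ = Cl (x :: l) (u ⊓ e) := rfl
  -- assemble
  have hXd : lX.dedup.toFinset = X := by ext z; simp [List.mem_dedup, ← hlX]
  have h1 : Cl lY (u ⊓ e) ⊓ e ≤ u := by
    rw [← Cl_dedup]
    refine (claimA lY.dedup (List.nodup_dedup lY) (fun z hz => ?_) u).trans inf_le_left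
    rw [← hlY]
    exact List.mem_toFinset.mpr (List.mem_dedup.mp hz)
  have hle : Cl lX (Cl lY (u ⊓ e) ⊓ e) ≤ u := by
    calc Cl lX (Cl lY (u ⊓ e) ⊓ e) ≤ Cl lX u := Cl_mono lX h1
      _ = u := Cl_fixed (fun z hz => hX_fix z (hlX ▸ List.mem_toFinset.mpr hz))
  have h2 : u ≤ Cl lX (u ⊓ e) := by
    rw [← Cl_dedup]
    have hB := claimB lX.dedup (List.nodup_dedup lX)
      (fun z hz => hlX ▸ List.mem_toFinset.mpr (List.mem_dedup.mp hz))
    rw [hXd, Finset.sdiff_self, Finset.inf_empty, inf_top_eq] at hB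
    exact hB
  have hge : u ≤ Cl lX (Cl lY (u ⊓ e) ⊓ e) :=
    h2.trans (Cl_mono lX (le_inf (le_Cl lY _) inf_le_right))
  rw [he']
  exact le_antisymm hle hge
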